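/- Let f : E → ℝ be convex, differentiable with L-Lipschitz gradient, and let 0 < γ ≤ 2/L. Then the gradient descent operator T = Id - γ∇f is 1-Lipschitz (nonexpansive). -/

import Mathlib

/-!
Convexity gives `f y + ⟪∇f y, z - y⟫ ≤ f z`, and the Lipschitz gradient gives the descent bound
`f z ≤ f x + ⟪∇f x, z - x⟫ + L/2 ‖z - x‖²`. Choosing `z = x - (∇f x - ∇f y)/L` and symmetrising in
`x, y` yields the Baillon–Haddad cocoercivity `‖∇f x - ∇f y‖² ≤ L ⟪∇f x - ∇f y, x - y⟫`. Expanding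
`‖(x - y) - γ (∇f x - ∇f y)‖²` with it shows that the cross term dominates the quadratic one
as soon as `γ L ≤ 2`.
-/

open scoped RealInnerProductSpace
open Set AffineMap

section GradientInequalities

variable {E : Type*} [NormedAddCommGroup E] [InnerProductSpace ℝ E] [CompleteSpace E]
  {f : E → ℝ}

theorem HasGradientAt.hasDerivAt_comp_lineMap {g x y : E} {t : ℝ}
    (h : HasGradientAt f g (lineMap x y t)) :
    HasDerivAt (fun s : ℝ => f (lineMap x y s)) ⟪g, y - x⟫ t := by
  exact h.hasFDerivAt.comp_hasDerivAt t hasDerivAt_lineMap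

theorem ConvexOn.add_inner_le_of_hasGradientAt (hf : ConvexOn ℝ univ f) {g x : E}
    (hg : HasGradientAt f g x) (y : E) : f x + ⟪g, y - x⟫ ≤ f y := by
  have hline : ConvexOn ℝ univ (fun t : ℝ => f (lineMap x y t)) := by
    have := hf.comp_affineMap (lineMap x y)
    rw [preimage_univ] at this
    exact this
  have hderiv : HasDerivAt (fun t : ℝ => f (lineMap x y t)) ⟪g, y - x⟫ 0 :=
    HasGradientAt.hasDerivAt_comp_lineMap (by simpa using hg)
  have := hline.le_slope_of_hasDerivAt (mem_univ 0) (mem_univ 1) one_pos hderiv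
  simp only [slope_def_field, lineMap_apply_one, lineMap_apply_zero, sub_zero, div_one] at this
  linarith

variable {f' : E → E} {L : ℝ}

theorem le_add_inner_add_sq_of_lipschitz_gradient (hf : ∀ x, HasGradientAt f (f' x) x)
    (hlip : ∀ x y, ‖f' x - f' y‖ ≤ L * ‖x - y‖) (x y : E) :
    f y ≤ f x + ⟪f' x, y - x⟫ + L / 2 * ‖y - x‖ ^ 2 := by
  set φ : ℝ → ℝ := fun t => f (lineMap x y t) - t * ⟪f' x, y - x⟫ - L / 2 * t ^ 2 * ‖y - x‖ ^ 2
  have hφ : ∀ t, HasDerivAt φ (⟪f' (lineMap x y t) - f' x, y - x⟫ - L * t * ‖y - x‖ ^ 2) t := by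
    intro t
    have hquad : HasDerivAt (fun t : ℝ => L / 2 * t ^ 2 * ‖y - x‖ ^ 2) (L * t * ‖y - x‖ ^ 2) t :=
      (((hasDerivAt_pow 2 t).const_mul (L / 2)).mul_const _).congr_deriv (by push_cast; ring)
    rw [inner_sub_left]
    exact (((hf _).hasDerivAt_comp_lineMap).sub ((hasDerivAt_id t).mul_const _)).sub hquad
      |>.congr_deriv (by simp)
  have hφ'_nonpos : ∀ t ∈ interior (Icc (0 : ℝ) 1),
      ⟪f' (lineMap x y t) - f' x, y - x⟫ - L * t * ‖y - x‖ ^ 2 ≤ 0 := by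
    intro t ht
    rw [interior_Icc] at ht
    have hdist : ‖lineMap x y t - x‖ = t * ‖y - x‖ := by
      rw [← vsub_eq_sub, lineMap_vsub_left, norm_smul, Real.norm_of_nonneg ht.1.le, vsub_eq_sub]
    refine sub_nonpos.mpr ?_
    calc ⟪f' (lineMap x y t) - f' x, y - x⟫ ≤ ‖f' (lineMap x y t) - f' x‖ * ‖y - x‖ :=
          real_inner_le_norm _ _
      _ ≤ L * ‖lineMap x y t - x‖ * ‖y - x‖ := by gcongr; exact hlip _ _
      _ = L * t * ‖y - x‖ ^ 2 := by rw [hdist]; ring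
  have hanti : AntitoneOn φ (Icc 0 1) :=
    antitoneOn_of_hasDerivWithinAt_nonpos (convex_Icc 0 1)
      (fun t _ => (hφ t).continuousAt.continuousWithinAt)
      (fun t _ => (hφ t).hasDerivWithinAt) hφ'_nonpos
  have := hanti (left_mem_Icc.mpr zero_le_one) (right_mem_Icc.mpr zero_le_one) zero_le_one
  simp only [φ, lineMap_apply_one, lineMap_apply_zero, one_pow, one_mul, mul_one, zero_mul,
    sub_zero, ne_eq, OfNat.ofNat_ne_zero, not_false_eq_true, zero_pow, mul_zero] at this
  linarith

theorem ConvexOn.add_inner_add_sq_div_le_of_lipschitz_gradient (hconv : ConvexOn ℝ univ f)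
    (hf : ∀ x, HasGradientAt f (f' x) x) (hlip : ∀ x y, ‖f' x - f' y‖ ≤ L * ‖x - y‖)
    (hL : 0 < L) (x y : E) :
    f y + ⟪f' y, x - y⟫ + ‖f' x - f' y‖ ^ 2 / (2 * L) ≤ f x := by
  set g := f' x - f' y
  set z := x - L⁻¹ • g
  have hconv_y := hconv.add_inner_le_of_hasGradientAt (hf y) z
  have hdescent_x := le_add_inner_add_sq_of_lipschitz_gradient hf hlip x z
  have hzy : ⟪f' y, z - y⟫ = ⟪f' y, x - y⟫ - L⁻¹ * ⟪f' y, g⟫ := by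
    rw [show z - y = (x - y) - L⁻¹ • g by module, inner_sub_right, real_inner_smul_right]
  have hzx : ⟪f' x, z - x⟫ = -(L⁻¹ * ⟪f' x, g⟫) := by
    rw [show z - x = -(L⁻¹ • g) by module, inner_neg_right, real_inner_smul_right]
  have hnorm : ‖z - x‖ ^ 2 = L⁻¹ ^ 2 * ‖g‖ ^ 2 := by
    rw [show z - x = -(L⁻¹ • g) by module, norm_neg, norm_smul, mul_pow, Real.norm_eq_abs, sq_abs]
  have hgg : L⁻¹ * ⟪f' x, g⟫ - L⁻¹ * ⟪f' y, g⟫ = L⁻¹ * ‖g‖ ^ 2 := by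
    rw [← mul_sub, ← inner_sub_left, real_inner_self_eq_norm_sq]
  rw [hzy] at hconv_y
  rw [hzx, hnorm] at hdescent_x
  have hcoeff : L⁻¹ * ‖g‖ ^ 2 - L / 2 * (L⁻¹ ^ 2 * ‖g‖ ^ 2) = ‖g‖ ^ 2 / (2 * L) := by
    field_simp
    ring
  linarith

theorem ConvexOn.sq_norm_sub_le_mul_inner_of_lipschitz_gradient (hconv : ConvexOn ℝ univ f)
    (hf : ∀ x, HasGradientAt f (f' x) x) (hlip : ∀ x y, ‖f' x - f' y‖ ≤ L * ‖x - y‖)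
    (hL : 0 < L) (x y : E) :
    ‖f' x - f' y‖ ^ 2 ≤ L * ⟪f' x - f' y, x - y⟫ := by
  have hxy := hconv.add_inner_add_sq_div_le_of_lipschitz_gradient hf hlip hL x y
  have hyx := hconv.add_inner_add_sq_div_le_of_lipschitz_gradient hf hlip hL y x
  rw [norm_sub_rev (f' y)] at hyx
  have hinner : ⟪f' x - f' y, x - y⟫ = -⟪f' y, x - y⟫ - ⟪f' x, y - x⟫ := by
    rw [inner_sub_left, ← neg_sub x y, inner_neg_right]
    ring
  have : ‖f' x - f' y‖ ^ 2 / L ≤ ⟪f' x - f' y, x - y⟫ := by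
    rw [hinner, show ‖f' x - f' y‖ ^ 2 / L = 2 * (‖f' x - f' y‖ ^ 2 / (2 * L)) by field_simp]
    linarith
  rwa [div_le_iff₀' hL] at this

end GradientInequalities

theorem norm_sub_smul_le_of_sq_norm_le_mul_inner {E : Type*} [NormedAddCommGroup E]
    [InnerProductSpace ℝ E] {d g : E} {L γ : ℝ} (hL : 0 < L) (hγ0 : 0 ≤ γ) (hγ : γ ≤ 2 / L)
    (hco : ‖g‖ ^ 2 ≤ L * ⟪g, d⟫) : ‖d - γ • g‖ ≤ ‖d‖ := by
  have hγL : γ * L ≤ 2 := (le_div_iff₀ hL).mp hγ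
  have hinner : 0 ≤ ⟪g, d⟫ := nonneg_of_mul_nonneg_right (le_trans (sq_nonneg _) hco) hL
  have hsq : ‖d - γ • g‖ ^ 2 = ‖d‖ ^ 2 - 2 * γ * ⟪g, d⟫ + γ ^ 2 * ‖g‖ ^ 2 := by
    rw [norm_sub_sq_real, real_inner_smul_right, real_inner_comm, norm_smul, mul_pow,
      Real.norm_eq_abs, sq_abs]
    ring
  have hquad : γ ^ 2 * ‖g‖ ^ 2 ≤ 2 * γ * ⟪g, d⟫ :=
    calc γ ^ 2 * ‖g‖ ^ 2 ≤ γ ^ 2 * (L * ⟪g, d⟫) := by gcongr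
      _ = γ * (γ * L) * ⟪g, d⟫ := by ring
      _ ≤ γ * 2 * ⟪g, d⟫ := by gcongr
      _ = 2 * γ * ⟪g, d⟫ := by ring
  refine (pow_le_pow_iff_left₀ (norm_nonneg _) (norm_nonneg _) two_ne_zero).mp ?_
  linarith

/-- The gradient descent operator `Id - γ∇f` is nonexpansive for `0 < γ ≤ 2/L`. -/
theorem stmt_3 {E : Type*} [NormedAddCommGroup E] [InnerProductSpace ℝ E]
    [FiniteDimensional ℝ E]
    (f : E → ℝ) (f' : E → E) (L γ : ℝ) (hL : 0 < L)
    (hconv : ConvexOn ℝ Set.univ f)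
    (hdiff : ∀ x, HasGradientAt f (f' x) x)
    (hlip : ∀ x y, ‖f' x - f' y‖ ≤ L * ‖x - y‖)
    (hγ0 : 0 < γ) (hγ : γ ≤ 2 / L) :
    ∀ x y : E, ‖(x - γ • f' x) - (y - γ • f' y)‖ ≤ ‖x - y‖ := by
  intro x y
  rw [show (x - γ • f' x) - (y - γ • f' y) = (x - y) - γ • (f' x - f' y) by module]
  exact norm_sub_smul_le_of_sq_norm_le_mul_inner hL hγ0.le hγ
    (hconv.sq_norm_sub_le_mul_inner_of_lipschitz_gradient hdiff hlip hL x y)
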